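/- arXiv:1606.08764 — 3 statements merged into one kernel-verified Lean document; each statement's English description precedes it below -/
import Mathlib

section
/- With the setting of the Dimension Lemma, for every index i ∈ ℕ, W_{i+1} = span(K_{i+1} ∪ W_i), where K_{i+1} = U⁻¹(W_i) ∩ W⊥. -/
/-!
`W_{i+1} = ker U_W^{i+2}` is the preimage of `W_i` under `U_W`. Since `U_W` kills `W = (Wᗮ)ᗮ`,
we have `Wᗮ ⊔ W_i = V`, and the modular law splits the preimage as
`(Wᗮ ∩ U_W⁻¹ W_i) ⊔ W_i`; on `Wᗮ` the map `U_W` is just `U`, so the first part is `K_{i+1}`.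
-/

namespace Module.End

variable {R M : Type*} [Ring R] [AddCommGroup M] [Module R M]

theorem ker_pow_succ_eq_comap (T : End R M) (n : ℕ) :
    LinearMap.ker (T ^ (n + 1)) = (LinearMap.ker (T ^ n)).comap T := by
  rw [pow_succ, mul_eq_comp, LinearMap.ker_comp]

theorem ker_pow_le_ker_pow_succ (T : End R M) (n : ℕ) :
    LinearMap.ker (T ^ n) ≤ LinearMap.ker (T ^ (n + 1)) := by
  rw [pow_succ', mul_eq_comp]
  exact LinearMap.ker_le_ker_comp _ _

theorem ker_le_ker_pow_succ (T : End R M) (n : ℕ) :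
    LinearMap.ker T ≤ LinearMap.ker (T ^ (n + 1)) := by
  rw [pow_succ, mul_eq_comp]
  exact LinearMap.ker_le_ker_comp _ _

/-- Modular law: `ker Tⁿ⁺¹` already supplements `S`, and lies below `ker Tⁿ⁺²`. -/
theorem ker_pow_add_two_eq_inf_comap_sup (T : End R M) (S : Submodule R M)
    (hS : S ⊔ LinearMap.ker T = ⊤) (n : ℕ) :
    LinearMap.ker (T ^ (n + 2)) =
      S ⊓ (LinearMap.ker (T ^ (n + 1))).comap T ⊔ LinearMap.ker (T ^ (n + 1)) := by
  have hS' : LinearMap.ker (T ^ (n + 1)) ⊔ S = ⊤ := by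
    rw [sup_comm, eq_top_iff, ← hS]
    exact sup_le_sup_left (ker_le_ker_pow_succ T n) S
  calc LinearMap.ker (T ^ (n + 2))
      = (LinearMap.ker (T ^ (n + 1)) ⊔ S) ⊓ LinearMap.ker (T ^ (n + 2)) := by
        rw [hS', top_inf_eq]
    _ = LinearMap.ker (T ^ (n + 1)) ⊔ S ⊓ LinearMap.ker (T ^ (n + 2)) :=
        sup_inf_assoc_of_le _ (ker_pow_le_ker_pow_succ T (n + 1))
    _ = S ⊓ (LinearMap.ker (T ^ (n + 1))).comap T ⊔ LinearMap.ker (T ^ (n + 1)) := by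
        rw [sup_comm, ker_pow_succ_eq_comap]

end Module.End

section OrthogonalProjection

variable {𝕜 E F : Type*} [RCLike 𝕜] [NormedAddCommGroup E] [InnerProductSpace 𝕜 E]
  [AddCommGroup F] [Module 𝕜 F] {S : Submodule 𝕜 E} [S.HasOrthogonalProjection]
  {g T : E →ₗ[𝕜] F}

theorem apply_eq_of_mem_of_apply_eq_orthogonalProjectionOnto
    (hT : ∀ v, T v = g (S.orthogonalProjectionOnto v)) {v : E} (hv : v ∈ S) : T v = g v := by
  rw [hT, S.orthogonalProjectionOnto_mem_subspace_eq_self ⟨v, hv⟩]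

theorem orthogonal_le_ker_of_apply_eq_orthogonalProjectionOnto
    (hT : ∀ v, T v = g (S.orthogonalProjectionOnto v)) : Sᗮ ≤ LinearMap.ker T := by
  intro v hv
  rw [LinearMap.mem_ker, hT, S.orthogonalProjectionOnto_apply_of_mem_orthogonal hv,
    Submodule.coe_zero, map_zero]

theorem sup_ker_eq_top_of_apply_eq_orthogonalProjectionOnto
    (hT : ∀ v, T v = g (S.orthogonalProjectionOnto v)) : S ⊔ LinearMap.ker T = ⊤ := by
  rw [eq_top_iff, ← S.sup_orthogonal_of_hasOrthogonalProjection]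
  exact sup_le_sup_left (orthogonal_le_ker_of_apply_eq_orthogonalProjectionOnto hT) S

end OrthogonalProjection

/-- In the setting of the Dimension Lemma (`V = ℂ^N`, `U` unitary, `W` a subspace,
`U_W = U ∘ P_{Wᗮ}`, `W_i = {w : U_W^(i+1) w = 0}`, `K_{i+1} = U⁻¹(W_i) ∩ Wᗮ`),
for every `i` we have `W_{i+1} = span (K_{i+1} ∪ W_i)`. -/
theorem dimension_lemma_span_step (N : ℕ)
    (U : EuclideanSpace ℂ (Fin N) ≃ₗᵢ[ℂ] EuclideanSpace ℂ (Fin N))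
    (W : Submodule ℂ (EuclideanSpace ℂ (Fin N)))
    (UW : Module.End ℂ (EuclideanSpace ℂ (Fin N)))
    (hUW : ∀ v, UW v = U ((Wᗮ.orthogonalProjectionOnto v : EuclideanSpace ℂ (Fin N))))
    (Wseq : ℕ → Submodule ℂ (EuclideanSpace ℂ (Fin N)))
    (hWseq : ∀ i w, w ∈ Wseq i ↔ (UW ^ (i + 1)) w = 0)
    (K : ℕ → Set (EuclideanSpace ℂ (Fin N)))
    (hK : ∀ i, K (i + 1) = {x | x ∈ (Wᗮ : Set (EuclideanSpace ℂ (Fin N))) ∧ U x ∈ Wseq i}) :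
    ∀ i : ℕ, (Wseq (i + 1) : Set (EuclideanSpace ℂ (Fin N)))
      = (Submodule.span ℂ (K (i + 1) ∪ (Wseq i : Set (EuclideanSpace ℂ (Fin N))))
          : Submodule ℂ (EuclideanSpace ℂ (Fin N))) := by
  intro i
  have hUW' : ∀ v, UW v = U.toLinearEquiv.toLinearMap (Wᗮ.orthogonalProjectionOnto v) := hUW
  have hWseq_eq_ker : ∀ j, Wseq j = LinearMap.ker (UW ^ (j + 1)) := fun j =>
    SetLike.ext fun w => (hWseq j w).trans LinearMap.mem_ker.symm
  have hK_eq : K (i + 1) = ↑(Wᗮ ⊓ (Wseq i).comap UW) := by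
    ext x
    rw [hK]
    refine and_congr_right fun hx => ?_
    rw [SetLike.mem_coe, Submodule.mem_comap, apply_eq_of_mem_of_apply_eq_orthogonalProjectionOnto hUW' hx]
    rfl
  rw [hK_eq, Submodule.span_union, Submodule.span_eq, Submodule.span_eq, hWseq_eq_ker,
    hWseq_eq_ker, Module.End.ker_pow_add_two_eq_inf_comap_sup UW Wᗮ
      (sup_ker_eq_top_of_apply_eq_orthogonalProjectionOnto hUW')]
end

section
/- Let V = ℂ^N be decomposed as an orthogonal direct sum W_max⊥ ⊕ W_max, write the compression of U_W to W_max⊥ in block form with upper-left m×m block A mapping W_max⊥-coordinates to W_max⊥-coordinates. Then the null space of A is {0}; consequently A is invertible. -/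
/-! Being the union of the kernels of the powers of `U_W`, `W_max` contains every `x` with
`Ũ_W x ∈ W_max`. If `A x = 0` then `Ũ_W x ∈ W_maxᗮᗮ = W_max`, so `x ∈ W_max ∩ W_maxᗮ = 0`.
In finite dimension injectivity gives bijectivity. -/

theorem Module.End.mem_of_pow_apply_mem {R M : Type*} [Semiring R] [AddCommMonoid M] [Module R M]
    {f : Module.End R M} {K : Submodule R M} (hK : ∀ w, w ∈ K ↔ ∃ i : ℕ, (f ^ (i + 1)) w = 0)
    {n : ℕ} {x : M} (hx : (f ^ n) x ∈ K) : x ∈ K := by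
  obtain ⟨i, hi⟩ := (hK _).mp hx
  refine (hK x).mpr ⟨i + n, ?_⟩
  rwa [add_right_comm, pow_add, Module.End.mul_apply]

theorem Submodule.ker_compression_eq_bot {𝕜 E : Type*} [RCLike 𝕜] [NormedAddCommGroup E]
    [InnerProductSpace 𝕜 E] {K : Submodule 𝕜 E} [K.HasOrthogonalProjection] {T : Module.End 𝕜 E}
    (hT : ∀ x, T x ∈ K → x ∈ K) {A : Kᗮ →ₗ[𝕜] Kᗮ}
    (hA : ∀ x : Kᗮ, (A x : E) = (Kᗮ.orthogonalProjectionOnto (T x) : E)) :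
    LinearMap.ker A = ⊥ := by
  refine (LinearMap.ker_eq_bot' (f := A)).mpr fun x hx ↦ ?_
  have hTx : T x ∈ K := by
    have : Kᗮ.orthogonalProjectionOnto (T x) = 0 := Subtype.ext (by simp [← hA, hx])
    simpa [K.orthogonal_orthogonal] using this
  have hxK : (x : E) ∈ K ⊓ Kᗮ := ⟨hT x hTx, x.2⟩
  simpa [K.inf_orthogonal_eq_bot] using hxK

theorem compression_block_injective_general (N : ℕ)
    (UW : Module.End ℂ (EuclideanSpace ℂ (Fin N)))
    (Wmax : Submodule ℂ (EuclideanSpace ℂ (Fin N)))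
    (hWmax : ∀ w, w ∈ Wmax ↔ ∃ i : ℕ, (UW ^ (i + 1)) w = 0)
    (d' : ℕ)
    (A : Wmaxᗮ →ₗ[ℂ] Wmaxᗮ)
    (hA : ∀ x : Wmaxᗮ, (A x : EuclideanSpace ℂ (Fin N)) =
      (Submodule.orthogonalProjectionOnto Wmaxᗮ ((UW ^ (d' + 1)) (x : EuclideanSpace ℂ (Fin N)))
        : EuclideanSpace ℂ (Fin N))) :
    LinearMap.ker A = ⊥ ∧ Function.Bijective A := by
  have hker : LinearMap.ker A = ⊥ :=
    Submodule.ker_compression_eq_bot (fun _ ↦ Module.End.mem_of_pow_apply_mem hWmax) hA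
  have hinj : Function.Injective A := LinearMap.ker_eq_bot.mp hker
  exact ⟨hker, hinj, LinearMap.surjective_of_injective hinj⟩

/-- Let `U` be unitary on `ℂ^N`, `W` a subspace, `U_W = U ∘ P_{Wᗮ}`, and
`W_max = {w : ∃ i, U_W^(i+1) w = 0}` (which equals `W_{d'}` for some `d'`).
Write `Ũ_W = U_W^(d'+1)` and let `A : W_maxᗮ → W_maxᗮ` be the compression of
`Ũ_W` to `W_maxᗮ` (the upper-left block of its block decomposition with respect
to `ℂ^N = W_maxᗮ ⊕ W_max`).  Then the null space of `A` is `{0}`; consequently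
`A` is invertible (bijective). -/
theorem compression_block_injective (N : ℕ)
    (U : EuclideanSpace ℂ (Fin N) ≃ₗᵢ[ℂ] EuclideanSpace ℂ (Fin N))
    (W : Submodule ℂ (EuclideanSpace ℂ (Fin N)))
    (UW : Module.End ℂ (EuclideanSpace ℂ (Fin N)))
    (hUW : ∀ v, UW v = U ((Submodule.orthogonalProjectionOnto Wᗮ v : EuclideanSpace ℂ (Fin N))))
    (Wmax : Submodule ℂ (EuclideanSpace ℂ (Fin N)))
    (hWmax : ∀ w, w ∈ Wmax ↔ ∃ i : ℕ, (UW ^ (i + 1)) w = 0)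
    (d' : ℕ) (hd' : ∀ w, w ∈ Wmax ↔ (UW ^ (d' + 1)) w = 0)
    (A : Wmaxᗮ →ₗ[ℂ] Wmaxᗮ)
    (hA : ∀ x : Wmaxᗮ, (A x : EuclideanSpace ℂ (Fin N)) =
      (Submodule.orthogonalProjectionOnto Wmaxᗮ ((UW ^ (d' + 1)) (x : EuclideanSpace ℂ (Fin N)))
        : EuclideanSpace ℂ (Fin N))) :
    LinearMap.ker A = ⊥ ∧ Function.Bijective A :=
  compression_block_injective_general N UW Wmax hWmax d' A hA
end

section
/- For binary strings x = x_1…x_n, the product of matrices (0,0,0,1,0)·P_$·P_{x_n}·P_{x_{n−1}}⋯P_{x_1}·P_¢·(1,0,0,0,0)^T equals 0.x_n x_{n−1}…x_1 = ∑_{i=1}^n x_{n+1−i} 2^{−i}, where P_¢, P_0, P_1, P_$ are the explicit 5×5 column-stochastic matrices: P_α = [[A_α, 0],[0, I₂]] for α ∈ {¢,0,1} and P_$ = [[0,0],[B, I₂]], with A_¢ = [[1/(2ε),0,0],[0,0,0],[(2ε−1)/(2ε),1,1]], A_0 = [[1,1/2,0],[0,1/2,0],[0,0,1]], A_1 = [[1/2,0,0],[1/2,1,0],[0,0,1]],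 B = [[0,1,0],[1,0,1]], for ε = 1/2 (so 1/(2ε) = 1). -/
/-- `P_¢ = [[A_¢, 0],[0, I₂]]` with `A_¢ = [[1/(2ε),0,0],[0,0,0],[(2ε−1)/(2ε),1,1]]`
for `ε = 1/2`. -/
noncomputable def Pcent : Matrix (Fin 5) (Fin 5) ℝ :=
  !![1, 0, 0, 0, 0;
     0, 0, 0, 0, 0;
     0, 1, 1, 0, 0;
     0, 0, 0, 1, 0;
     0, 0, 0, 0, 1]

/-- `P_0 = [[A_0, 0],[0, I₂]]` with `A_0 = [[1,1/2,0],[0,1/2,0],[0,0,1]]`. -/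
noncomputable def Pzero : Matrix (Fin 5) (Fin 5) ℝ :=
  !![1, 1/2, 0, 0, 0;
     0, 1/2, 0, 0, 0;
     0, 0,   1, 0, 0;
     0, 0,   0, 1, 0;
     0, 0,   0, 0, 1]

/-- `P_1 = [[A_1, 0],[0, I₂]]` with `A_1 = [[1/2,0,0],[1/2,1,0],[0,0,1]]`. -/
noncomputable def Pone : Matrix (Fin 5) (Fin 5) ℝ :=
  !![1/2, 0, 0, 0, 0;
     1/2, 1, 0, 0, 0;
     0,   0, 1, 0, 0;
     0,   0, 0, 1, 0;
     0,   0, 0, 0, 1]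

/-- `P_$ = [[0₃ₓ₃, 0₃ₓ₂],[B, I₂]]` with `B = [[0,1,0],[1,0,1]]`. -/
noncomputable def Pdollar : Matrix (Fin 5) (Fin 5) ℝ :=
  !![0, 0, 0, 0, 0;
     0, 0, 0, 0, 0;
     0, 0, 0, 0, 0;
     0, 1, 0, 1, 0;
     1, 0, 1, 0, 1]

/-- Transition matrix for an input bit. -/
noncomputable def Pbit (b : Bool) : Matrix (Fin 5) (Fin 5) ℝ :=
  if b then Pone else Pzero

/-! After reading the prefix `x_1 … x_k`, the first column of `P_{x_k} ⋯ P_{x_1} · P_¢` is the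
distribution `(1 - s, s, 0, 0, 0)` with `s = 0.x_k … x_1`: the first two states act as a
two-state chain whose second coordinate is halved and, on reading a `1`, raised by `1/2`.
The fourth row of `P_$` then reads off `s`. -/

open Matrix

theorem Matrix.col_mul {m n o α : Type*} [Fintype n] [NonUnitalNonAssocSemiring α]
    (A : Matrix m n α) (B : Matrix n o α) (j : o) : (A * B).col j = A *ᵥ B.col j :=
  rfl

noncomputable def binaryFraction (x : List Bool) : ℝ :=
  x.foldl (fun s b => (s + if b then 1 else 0) / 2) 0

theorem binaryFraction_append_singleton (x : List Bool) (b : Bool) :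
    binaryFraction (x ++ [b]) = (binaryFraction x + if b then 1 else 0) / 2 := by
  simp only [binaryFraction, List.foldl_append, List.foldl_cons, List.foldl_nil]

theorem binaryFraction_eq_sum (x : List Bool) :
    binaryFraction x = ∑ i ∈ Finset.range x.length,
      (if x.getD (x.length - 1 - i) false then (1 : ℝ) else 0) * (1 / 2) ^ (i + 1) := by
  induction x using List.reverseRecOn with
  | nil => simp [binaryFraction]
  | append_singleton x b ih =>
    have hlast : (x ++ [b]).getD (x.length + 1 - 1 - 0) false = b := by simp
    have hinit : ∀ i ∈ Finset.range x.length,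
        (x ++ [b]).getD (x.length + 1 - 1 - (i + 1)) false = x.getD (x.length - 1 - i) false := by
      intro i hi
      rw [List.getD_append _ _ _ _ (by grind)]
      congr 1
      omega
    rw [binaryFraction_append_singleton, ih, List.length_append, List.length_singleton,
      Finset.sum_range_succ', hlast, add_div, Finset.sum_div]
    congr 1
    · refine Finset.sum_congr rfl fun i hi => ?_
      rw [hinit i hi]
      ring
    · ring

noncomputable def rabinState (s : ℝ) : Fin 5 → ℝ := ![1 - s, s, 0, 0, 0]

theorem Pcent_col_zero : Pcent.col 0 = rabinState 0 := by
  ext i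
  fin_cases i <;> simp [Pcent, rabinState]

theorem Pbit_mulVec_rabinState (b : Bool) (s : ℝ) :
    Pbit b *ᵥ rabinState s = rabinState ((s + if b then 1 else 0) / 2) := by
  ext i
  cases b <;> fin_cases i <;>
    simp [Pbit, Pone, Pzero, rabinState, mulVec, dotProduct, Fin.sum_univ_five] <;> ring

theorem Pdollar_mulVec_rabinState_three (s : ℝ) : (Pdollar *ᵥ rabinState s) 3 = s := by
  simp [Pdollar, rabinState, mulVec, dotProduct, Fin.sum_univ_five]

theorem col_zero_foldl_Pbit (x : List Bool) :
    (x.foldl (fun A b => Pbit b * A) Pcent).col 0 = rabinState (binaryFraction x) := by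
  rw [← List.foldl_hom (col · 0) (g₂ := fun v b => Pbit b *ᵥ v) fun A b => (col_mul _ _ _).symm,
    Pcent_col_zero]
  exact List.foldl_hom rabinState fun s b => Pbit_mulVec_rabinState b s

/-- For a binary string `x = x_1 … x_n`, the matrix product
`(0,0,0,1,0) · P_$ · P_{x_n} ⋯ P_{x_1} · P_¢ · (1,0,0,0,0)ᵀ` — i.e. the
`(3,0)`-entry (fourth row, first column) of `P_$ · P_{x_n} ⋯ P_{x_1} · P_¢` —
equals `0.x_n x_{n−1} … x_1 = ∑_{i=1}^n x_{n+1−i} 2^{−i}`. -/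
theorem rabin_matrix_product (x : List Bool) :
    (Pdollar * x.foldl (fun A b => Pbit b * A) Pcent) 3 0 =
      ∑ i ∈ Finset.range x.length,
        (if x.getD (x.length - 1 - i) false then (1 : ℝ) else 0) * (1 / 2) ^ (i + 1) := by
  calc (Pdollar * x.foldl (fun A b => Pbit b * A) Pcent) 3 0
      = (Pdollar *ᵥ (x.foldl (fun A b => Pbit b * A) Pcent).col 0) 3 := rfl
    _ = binaryFraction x := by rw [col_zero_foldl_Pbit, Pdollar_mulVec_rabinState_three]
    _ = _ := binaryFraction_eq_sum x
end
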